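/- The maps t ↦ α_t and t ↦ γ_t from [0,1) to the bounded operators on ℓ²(ℕ×ℤ) are continuous with respect to the operator norm (in particular they are norm-continuous at t = 0). -/

import Mathlib

/-- `ℓ²(ℕ×ℤ)`: the Hilbert space of square-summable complex families indexed by `ℕ × ℤ`. -/
noncomputable abbrev l2NZ : Type := lp (fun _ : ℕ × ℤ => ℂ) 2

/-- The standard orthonormal basis vectors `e_{n,k}` of `ℓ²(ℕ×ℤ)`. -/
noncomputable def eNZ (n : ℕ) (k : ℤ) : l2NZ := lp.single 2 (n, k) (1 : ℂ)

/-- The defining property of the operators `α_t, γ_t` on `ℓ²(ℕ×ℤ)`: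
`α_t e_{n,k} = √(1−t^{2n}) e_{n−1,k−1}` for `n ≥ 1`, `α_t e_{0,k} = 0`, and
`γ_t e_{n,k} = tⁿ e_{n,k−1}` (with the convention `0⁰ = 1`, so at `t = 0` this reads
`α₀ e_{n,k} = e_{n−1,k−1}` for `n ≥ 1`, `α₀ e_{0,k} = 0`, `γ₀ e_{0,k} = e_{0,k−1}`,
`γ₀ e_{n,k} = 0` for `n ≥ 1`). -/
def IsAlphaGamma (t : ℝ) (α γ : l2NZ →L[ℂ] l2NZ) : Prop :=
  (∀ (n : ℕ) (k : ℤ),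
    α (eNZ (n + 1) k) = (Real.sqrt (1 - t ^ (2 * (n + 1))) : ℂ) • eNZ n (k - 1)) ∧
  (∀ k : ℤ, α (eNZ 0 k) = 0) ∧
  (∀ (n : ℕ) (k : ℤ), γ (eNZ n k) = ((t ^ n : ℝ) : ℂ) • eNZ n (k - 1))

/-!
A weighted shift `e_{σ j} ↦ d_j e_j` (with `σ` injective, killing the basis vectors outside the
range of `σ`) has norm at most `sup_j |d_j|`. Since `α_t - α_s` and `γ_t - γ_s` are weighted
shifts whose weights are the differences of the weights of `α` and `γ`, norm continuity reduces
to equicontinuity of the weight families `t ↦ tⁿ` and `t ↦ √(1 - t^{2n+2})` on `[0, 1)`. On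
`[-r, r]` with `r < 1` all powers are Lipschitz with the common constant `1 / (1 - r)` (geometric
series), and `√` is uniformly continuous since `|√a - √b| ≤ √|a - b|`.
-/

open scoped ENNReal

section WeightedShift

variable {ι 𝕜 : Type*} [DecidableEq ι] [NontriviallyNormedField 𝕜]
  {p : ℝ≥0∞} [Fact (1 ≤ p)]

def IsWeightedShift (σ : ι → ι) (d : ι → 𝕜)
    (T : lp (fun _ : ι => 𝕜) p →L[𝕜] lp (fun _ : ι => 𝕜) p) : Prop :=
  (∀ j, T (lp.single p (σ j) 1) = d j • lp.single p j 1) ∧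
    ∀ i ∉ Set.range σ, T (lp.single p i 1) = 0

variable {σ : ι → ι} {d d' : ι → 𝕜}
  {T T' : lp (fun _ : ι => 𝕜) p →L[𝕜] lp (fun _ : ι => 𝕜) p}

theorem IsWeightedShift.sub (hT : IsWeightedShift σ d T) (hT' : IsWeightedShift σ d' T') :
    IsWeightedShift σ (d - d') (T - T') :=
  ⟨fun j => by simp [hT.1 j, hT'.1 j, sub_smul],
    fun i hi => by simp [hT.2 i hi, hT'.2 i hi]⟩

theorem IsWeightedShift.apply_apply (hT : IsWeightedShift σ d T) (hσ : σ.Injective) (hp : p ≠ ⊤)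
    (x : lp (fun _ : ι => 𝕜) p) (j : ι) : T x j = d j * x (σ j) := by
  have key : (lp.evalCLM 𝕜 _ p j).comp T = d j • lp.evalCLM 𝕜 _ p (σ j) := by
    refine lp.ext_continuousLinearMap hp fun i => ContinuousLinearMap.ext_ring ?_
    show T (lp.single p i 1) j = d j * (lp.single p i (1 : 𝕜) : ι → 𝕜) (σ j)
    by_cases hi : i ∈ Set.range σ
    · obtain ⟨k, rfl⟩ := hi
      rw [hT.1 k]
      by_cases hkj : k = j
      · subst hkj; simp
      · simp [lp.single_apply, hσ.eq_iff, Ne.symm hkj]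
    · have hji : σ j ≠ i := fun h => hi ⟨j, h⟩
      simp [hT.2 i hi, lp.single_apply, hji]
  exact congr($key x)

theorem IsWeightedShift.opNorm_le (hT : IsWeightedShift σ d T) (hσ : σ.Injective) (hp : p ≠ ⊤)
    {C : ℝ} (hC : 0 ≤ C) (hd : ∀ j, ‖d j‖ ≤ C) : ‖T‖ ≤ C := by
  have hp₀ : 0 < p.toReal := ENNReal.toReal_pos (zero_lt_one.trans_le Fact.out).ne' hp
  refine T.opNorm_le_bound hC fun x =>
    lp.norm_le_of_forall_sum_le hp₀ (by positivity) fun s => ?_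
  calc ∑ j ∈ s, ‖T x j‖ ^ p.toReal
      = ∑ j ∈ s, ‖d j‖ ^ p.toReal * ‖x (σ j)‖ ^ p.toReal := by
        simp only [hT.apply_apply hσ hp, norm_mul, Real.mul_rpow (norm_nonneg _) (norm_nonneg _)]
    _ ≤ ∑ j ∈ s, C ^ p.toReal * ‖x (σ j)‖ ^ p.toReal := by gcongr; exact hd _
    _ = C ^ p.toReal * ∑ i ∈ s.map ⟨σ, hσ⟩, ‖x i‖ ^ p.toReal := by
        rw [Finset.sum_map, Finset.mul_sum]; rfl
    _ ≤ C ^ p.toReal * ‖x‖ ^ p.toReal := by gcongr; exact lp.sum_rpow_le_norm_rpow hp₀ x _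
    _ = (C * ‖x‖) ^ p.toReal := (Real.mul_rpow hC (norm_nonneg _)).symm

theorem continuousOn_of_isWeightedShift {X : Type*} [TopologicalSpace X]
    {T : X → lp (fun _ : ι => 𝕜) p →L[𝕜] lp (fun _ : ι => 𝕜) p} {d : ι → X → 𝕜}
    {S : Set X} (hσ : σ.Injective) (hp : p ≠ ⊤)
    (hT : ∀ x ∈ S, IsWeightedShift σ (fun j => d j x) (T x)) (hd : EquicontinuousOn d S) :
    ContinuousOn T S := by
  refine fun x₀ hx₀ => Metric.tendsto_nhds.2 fun ε hε => ?_
  filter_upwards [self_mem_nhdsWithin, hd x₀ hx₀ _ (Metric.dist_mem_uniformity (half_pos hε))]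
    with x hx hdx
  rw [dist_eq_norm]
  refine (((hT x hx).sub (hT x₀ hx₀)).opNorm_le hσ hp (half_pos hε).le fun j => ?_).trans_lt
    (half_lt_self hε)
  rw [Pi.sub_apply, ← dist_eq_norm, dist_comm]
  exact (hdx j).le

end WeightedShift

theorem abs_pow_sub_pow_le_of_abs_le {a b r : ℝ} (ha : |a| ≤ r) (hb : |b| ≤ r) (hr : r < 1)
    (n : ℕ) : |a ^ n - b ^ n| ≤ |a - b| / (1 - r) := by
  have hr₀ : 0 ≤ r := (abs_nonneg a).trans ha
  rw [← Commute.geom_sum₂_mul (Commute.all a b), abs_mul, mul_comm, div_eq_mul_inv]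
  gcongr
  calc |∑ i ∈ Finset.range n, a ^ i * b ^ (n - 1 - i)|
      ≤ ∑ i ∈ Finset.range n, r ^ i := by
        refine (Finset.abs_sum_le_sum_abs _ _).trans (Finset.sum_le_sum fun i _ => ?_)
        rw [abs_mul, abs_pow, abs_pow]
        calc |a| ^ i * |b| ^ (n - 1 - i) ≤ r ^ i * 1 := by
              gcongr; exact pow_le_one₀ (abs_nonneg b) (hb.trans hr.le)
          _ = r ^ i := mul_one _
    _ ≤ (1 - r)⁻¹ := by
        have := geom_sum_Ico_le_of_lt_one (m := 0) (n := n) hr₀ hr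
        rwa [← Finset.range_eq_Ico, pow_zero, one_div] at this

open Filter Topology in
theorem equicontinuousAt_pow {t₀ : ℝ} (ht₀ : |t₀| < 1) :
    EquicontinuousAt (fun (n : ℕ) (t : ℝ) => t ^ n) t₀ := by
  set r := (1 + |t₀|) / 2 with hr_def
  have ht₀r : |t₀| < r := by linarith
  have hr : r < 1 := by linarith
  refine Metric.equicontinuousAt_of_continuity_modulus (fun t => |t₀ - t| / (1 - r)) ?_ _ ?_
  · simpa using (((continuous_const (y := t₀)).sub continuous_id).abs.div_const (1 - r)).tendsto t₀
  · have : ∀ᶠ t in 𝓝 t₀, |t| < r := (continuous_abs.tendsto t₀).eventually (gt_mem_nhds ht₀r)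
    filter_upwards [this] with t ht n
    exact abs_pow_sub_pow_le_of_abs_le ht₀r.le ht.le hr n

theorem Real.abs_sqrt_sub_sqrt_le (a b : ℝ) : |√a - √b| ≤ √|a - b| := by
  wlog hba : b ≤ a generalizing a b
  · rw [abs_sub_comm, abs_sub_comm a]
    exact this b a (le_of_not_ge hba)
  rw [abs_of_nonneg (sub_nonneg.2 (Real.sqrt_le_sqrt hba)), abs_of_nonneg (sub_nonneg.2 hba),
    sub_le_iff_le_add, Real.sqrt_le_left (by positivity)]
  have hb : b ≤ √b ^ 2 := by
    rcases le_total 0 b with h | h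
    · rw [Real.sq_sqrt h]
    · exact h.trans (sq_nonneg _)
  nlinarith [Real.sq_sqrt (sub_nonneg.2 hba), Real.sqrt_nonneg (a - b), Real.sqrt_nonneg b]

theorem Real.uniformContinuous_sqrt : UniformContinuous Real.sqrt := by
  refine Metric.uniformContinuous_iff.2 fun ε hε => ⟨ε ^ 2, by positivity, fun {a b} h => ?_⟩
  rw [Real.dist_eq] at h ⊢
  calc |√a - √b| ≤ √|a - b| := Real.abs_sqrt_sub_sqrt_le a b
    _ < ε := (Real.sqrt_lt' hε).2 h

theorem UniformContinuous.comp_equicontinuousAt {ι X α β : Type*} [TopologicalSpace X]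
    [UniformSpace α] [UniformSpace β] {g : α → β} (hg : UniformContinuous g)
    {F : ι → X → α} {x₀ : X} (hF : EquicontinuousAt F x₀) :
    EquicontinuousAt (fun i => g ∘ F i) x₀ :=
  fun _ hU => hF _ (hg hU)

theorem IsAlphaGamma.isWeightedShift_alpha {t : ℝ} {α γ : l2NZ →L[ℂ] l2NZ}
    (h : IsAlphaGamma t α γ) :
    IsWeightedShift (fun j : ℕ × ℤ => (j.1 + 1, j.2 + 1))
      (fun j => ((√(1 - t ^ (2 * (j.1 + 1))) : ℝ) : ℂ)) α := by
  refine ⟨fun j => by simpa [eNZ] using h.1 j.1 (j.2 + 1), fun ⟨n, k⟩ hi => ?_⟩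
  cases n with
  | zero => exact h.2.1 k
  | succ n => exact (hi ⟨(n, k - 1), by simp⟩).elim

theorem IsAlphaGamma.isWeightedShift_gamma {t : ℝ} {α γ : l2NZ →L[ℂ] l2NZ}
    (h : IsAlphaGamma t α γ) :
    IsWeightedShift (fun j : ℕ × ℤ => (j.1, j.2 + 1)) (fun j => ((t ^ j.1 : ℝ) : ℂ)) γ :=
  ⟨fun j => by simpa [eNZ] using h.2.2 j.1 (j.2 + 1),
    fun i hi => (hi ⟨(i.1, i.2 - 1), by simp⟩).elim⟩

/-- **Statement 10.** The maps `t ↦ α_t` and `t ↦ γ_t` from `[0,1)` to the bounded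
operators on `ℓ²(ℕ×ℤ)` are continuous in the operator norm (in particular, norm-continuous
at `t = 0`). -/
theorem alphaGamma_norm_continuous
    (A G : ℝ → (l2NZ →L[ℂ] l2NZ))
    (h : ∀ t ∈ Set.Ico (0 : ℝ) 1, IsAlphaGamma t (A t) (G t)) :
    ContinuousOn A (Set.Ico (0 : ℝ) 1) ∧ ContinuousOn G (Set.Ico (0 : ℝ) 1) := by
  have hpow (t : ℝ) (ht : t ∈ Set.Ico (0 : ℝ) 1) :
      EquicontinuousAt (fun (n : ℕ) (t : ℝ) => t ^ n) t :=
    equicontinuousAt_pow (abs_lt.2 ⟨by linarith [ht.1], ht.2⟩)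
  have hofReal : UniformContinuous ((↑) : ℝ → ℂ) := Complex.isometry_ofReal.uniformContinuous
  have hsqrt : UniformContinuous fun u : ℝ => ((√(1 - u) : ℝ) : ℂ) :=
    hofReal.comp <|
      Real.uniformContinuous_sqrt.comp (uniformContinuous_const.sub uniformContinuous_id)
  constructor
  · refine continuousOn_of_isWeightedShift (fun a b hab => by simpa [Prod.ext_iff] using hab)
      ENNReal.ofNat_ne_top (fun t ht => (h t ht).isWeightedShift_alpha) fun t ht => ?_
    have := (hpow t ht).comp fun j : ℕ × ℤ => 2 * (j.1 + 1)
    exact (hsqrt.comp_equicontinuousAt this).equicontinuousWithinAt _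
  · refine continuousOn_of_isWeightedShift (fun a b hab => by simpa [Prod.ext_iff] using hab)
      ENNReal.ofNat_ne_top (fun t ht => (h t ht).isWeightedShift_gamma) fun t ht => ?_
    exact (hofReal.comp_equicontinuousAt ((hpow t ht).comp Prod.fst)).equicontinuousWithinAt _
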